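/- arXiv:1903.09139 — 4 statements merged into one kernel-verified Lean document; each statement's English description precedes it below -/
import Mathlib

section
/- Let n ≤ d, let A be a real n×d matrix with rank(A) = n, let Σ be a d×d real symmetric positive definite matrix, let α* ∈ ℝ^d and W ∈ ℝ^n, and set Y := A α* + W and B := A Σ^{-1/2}. Then the matrix B Bᵀ is invertible, and the set { (α − α*)ᵀ Σ (α − α*) : α ∈ ℝ^d, A α = Y } has least element Wᵀ (B Bᵀ)^{-1} W; that is, every α ∈ ℝ^d with A α = Y satisfies (α − α*)ᵀ Σ (α − α*) ≥ Wᵀ (B Bᵀ)^{-1} W, and equality is attained by the interpolator α = α* + Σ^{-1/2} Bᵀ (B Bᵀ)^{-1} W. -/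
open Matrix

/-!
Whitening by `S = Σ^{1/2}` turns the excess risk `(α - α*)ᵀ Σ (α - α*)` into the squared
Euclidean norm of `β = S (α - α*)`, and the interpolation constraint `A α = Y` into `B β = W`.
Among the solutions of `B β = W`, the vector `Bᵀ (B Bᵀ)⁻¹ W` is orthogonal to `ker B`, hence of
least norm, and its squared norm is `Wᵀ (B Bᵀ)⁻¹ W`.
-/

/-- The positive semidefinite square root of a positive semidefinite matrix, as defined in
the older Mathlib (removed since). -/
noncomputable def Matrix.PosSemidef.sqrt {n 𝕜 : Type*} [Fintype n] [DecidableEq n] [RCLike 𝕜] [PartialOrder 𝕜]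
    {A : Matrix n n 𝕜} (hA : A.PosSemidef) : Matrix n n 𝕜 :=
  hA.1.eigenvectorUnitary.1 * diagonal ((↑) ∘ (√·) ∘ hA.1.eigenvalues) *
    (star hA.1.eigenvectorUnitary : Matrix n n 𝕜)

namespace Matrix

section Sqrt

variable {m : Type*} [Fintype m] [DecidableEq m] {A : Matrix m m ℝ}

lemma PosSemidef.sqrt_mul_self (hA : A.PosSemidef) : hA.sqrt * hA.sqrt = A := by
  unfold Matrix.PosSemidef.sqrt
  conv_rhs => rw [hA.1.spectral_theorem, Unitary.conjStarAlgAut_apply]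
  have hU : (star hA.1.eigenvectorUnitary : Matrix m m ℝ) * hA.1.eigenvectorUnitary.1 = 1 :=
    Unitary.coe_star_mul_self _
  rw [show ∀ U D U' : Matrix m m ℝ, U * D * U' * (U * D * U') = U * (D * (U' * U) * D) * U' by
    intro U D U'; simp only [Matrix.mul_assoc], hU, Matrix.mul_one, diagonal_mul_diagonal]
  congr 3
  funext i
  simp [Real.mul_self_sqrt (hA.eigenvalues_nonneg i)]

lemma PosSemidef.transpose_sqrt (hA : A.PosSemidef) : hA.sqrtᵀ = hA.sqrt := by
  unfold Matrix.PosSemidef.sqrt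
  simp [transpose_mul, Matrix.mul_assoc, star_eq_conjTranspose]

lemma PosSemidef.dotProduct_mulVec_self_eq (hA : A.PosSemidef) (v : m → ℝ) :
    v ⬝ᵥ A *ᵥ v = hA.sqrt *ᵥ v ⬝ᵥ hA.sqrt *ᵥ v := by
  conv_lhs => rw [← hA.sqrt_mul_self, ← mulVec_mulVec]
  rw [dotProduct_mulVec, ← mulVec_transpose, hA.transpose_sqrt]

lemma PosDef.isUnit_det_sqrt (hA : A.PosDef) : IsUnit hA.posSemidef.sqrt.det := by
  refine isUnit_iff_ne_zero.mpr fun h ↦ hA.det_pos.ne' ?_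
  rw [← hA.posSemidef.sqrt_mul_self, det_mul, h, zero_mul]

end Sqrt

section Field

variable {m n R : Type*} [Fintype m] [Fintype n] [DecidableEq m] [Field R]

lemma isUnit_of_rank_eq_card {M : Matrix m m R} (h : M.rank = Fintype.card m) : IsUnit M := by
  rw [← mulVec_surjective_iff_isUnit]
  have hrange : LinearMap.range M.mulVecLin = ⊤ :=
    Submodule.eq_top_of_finrank_eq (by rw [← rank, h, Module.finrank_fintype_fun_eq_card])
  exact LinearMap.range_eq_top.mp hrange

lemma isUnit_mul_transpose_of_rank_eq_card [LinearOrder R] [IsStrictOrderedRing R]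
    {B : Matrix m n R} (h : B.rank = Fintype.card m) : IsUnit (B * Bᵀ) :=
  isUnit_of_rank_eq_card (by rw [rank_self_mul_transpose, h])

variable (B : Matrix m n R) (w : m → R)

/-- The least-norm solution of `B x = w` when `B` has full row rank (otherwise `(B * Bᵀ)⁻¹` is
junk). -/
noncomputable def leastNormSolution : n → R := Bᵀ *ᵥ (B * Bᵀ)⁻¹ *ᵥ w

variable {B w}

lemma mulVec_leastNormSolution (hB : IsUnit (B * Bᵀ)) : B *ᵥ B.leastNormSolution w = w := by
  rw [leastNormSolution, mulVec_mulVec, mulVec_mulVec,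
    mul_nonsing_inv _ ((isUnit_iff_isUnit_det _).mp hB), one_mulVec]

lemma leastNormSolution_dotProduct_self (hB : IsUnit (B * Bᵀ)) :
    B.leastNormSolution w ⬝ᵥ B.leastNormSolution w = w ⬝ᵥ (B * Bᵀ)⁻¹ *ᵥ w := by
  conv_lhs => enter [1]; rw [leastNormSolution]
  rw [mulVec_transpose, ← dotProduct_mulVec, mulVec_leastNormSolution hB, dotProduct_comm]

lemma leastNormSolution_dotProduct_eq_zero {u : n → R} (hu : B *ᵥ u = 0) :
    B.leastNormSolution w ⬝ᵥ u = 0 := by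
  rw [leastNormSolution, mulVec_transpose, ← dotProduct_mulVec, hu, dotProduct_zero]

/-- Pythagoras: `v - x` lies in the kernel of `B`, which is orthogonal to `x`. -/
lemma leastNormSolution_dotProduct_self_le [LinearOrder R] [IsStrictOrderedRing R]
    (hB : IsUnit (B * Bᵀ)) {v : n → R} (hv : B *ᵥ v = w) :
    B.leastNormSolution w ⬝ᵥ B.leastNormSolution w ≤ v ⬝ᵥ v := by
  set x := B.leastNormSolution w
  have hker : B *ᵥ (v - x) = 0 := by rw [mulVec_sub, hv, mulVec_leastNormSolution hB, sub_self]
  have horth : x ⬝ᵥ (v - x) = 0 := leastNormSolution_dotProduct_eq_zero hker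
  have hpyth : v ⬝ᵥ v = x ⬝ᵥ x + (v - x) ⬝ᵥ (v - x) := by
    conv_lhs => rw [← add_sub_cancel x v]
    rw [add_dotProduct, dotProduct_add, dotProduct_add, dotProduct_comm (v - x) x, horth]
    ring
  rw [hpyth, le_add_iff_nonneg_right]
  exact Finset.sum_nonneg fun i _ ↦ mul_self_nonneg _

end Field

end Matrix

theorem interpolation_fundamental_price_general (n d : ℕ)
    (A : Matrix (Fin n) (Fin d) ℝ) (hrank : A.rank = n)
    (Sg : Matrix (Fin d) (Fin d) ℝ) (hSg : Sg.PosDef)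
    (αstar : Fin d → ℝ) (W : Fin n → ℝ) (Y : Fin n → ℝ)
    (hY : Y = A.mulVec αstar + W)
    (B : Matrix (Fin n) (Fin d) ℝ) (hB : B = A * (hSg.posSemidef.sqrt)⁻¹) :
    IsUnit (B * Bᵀ) ∧
    (∀ α : Fin d → ℝ, A.mulVec α = Y →
      W ⬝ᵥ (B * Bᵀ)⁻¹.mulVec W ≤ (α - αstar) ⬝ᵥ Sg.mulVec (α - αstar)) ∧
    (A.mulVec (αstar + (hSg.posSemidef.sqrt)⁻¹.mulVec (Bᵀ.mulVec ((B * Bᵀ)⁻¹.mulVec W))) = Y ∧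
      ((αstar + (hSg.posSemidef.sqrt)⁻¹.mulVec (Bᵀ.mulVec ((B * Bᵀ)⁻¹.mulVec W))) - αstar) ⬝ᵥ
          Sg.mulVec ((αstar + (hSg.posSemidef.sqrt)⁻¹.mulVec (Bᵀ.mulVec ((B * Bᵀ)⁻¹.mulVec W)))
            - αstar) =
        W ⬝ᵥ (B * Bᵀ)⁻¹.mulVec W) := by
  set S := hSg.posSemidef.sqrt
  have hS : IsUnit S.det := hSg.isUnit_det_sqrt
  have hBS : B * S = A := by rw [hB, Matrix.mul_assoc, nonsing_inv_mul S hS, Matrix.mul_one]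
  have hBBt : IsUnit (B * Bᵀ) := isUnit_mul_transpose_of_rank_eq_card <| by
    rw [hB, rank_mul_eq_left_of_isUnit_det _ _ (isUnit_nonsing_inv_det S hS), hrank,
      Fintype.card_fin]
  have hx : Bᵀ *ᵥ (B * Bᵀ)⁻¹ *ᵥ W = B.leastNormSolution W := rfl
  simp only [hx, add_sub_cancel_left, hSg.posSemidef.dotProduct_mulVec_self_eq]
  refine ⟨hBBt, fun α hα ↦ ?_, ?_, ?_⟩
  · rw [← leastNormSolution_dotProduct_self hBBt]
    refine leastNormSolution_dotProduct_self_le hBBt ?_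
    rw [mulVec_mulVec, hBS, mulVec_sub, hα, hY, add_sub_cancel_left]
  · rw [mulVec_add, mulVec_mulVec, ← hB, mulVec_leastNormSolution hBBt, hY]
  · rw [mulVec_mulVec, mul_nonsing_inv S hS, one_mulVec, leastNormSolution_dotProduct_self hBBt]

/-- For `n ≤ d`, a rank-`n` matrix `A`, a symmetric positive definite
feature covariance `Sg`, true signal `αstar`, noise `W`, output `Y = A αstar + W`, and
whitened matrix `B = A Sg^{-1/2}`: the matrix `B Bᵀ` is invertible, every interpolating
solution `α` (with `A α = Y`) has excess test MSE `(α - αstar)ᵀ Sg (α - αstar)` at least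
`Wᵀ (B Bᵀ)⁻¹ W`, and this value is attained by the ideal interpolator
`αstar + Sg^{-1/2} Bᵀ (B Bᵀ)⁻¹ W`. -/
theorem interpolation_fundamental_price (n d : ℕ) (hnd : n ≤ d)
    (A : Matrix (Fin n) (Fin d) ℝ) (hrank : A.rank = n)
    (Sg : Matrix (Fin d) (Fin d) ℝ) (hSg : Sg.PosDef)
    (αstar : Fin d → ℝ) (W : Fin n → ℝ) (Y : Fin n → ℝ)
    (hY : Y = A.mulVec αstar + W)
    (B : Matrix (Fin n) (Fin d) ℝ) (hB : B = A * (hSg.posSemidef.sqrt)⁻¹) :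
    IsUnit (B * Bᵀ) ∧
    (∀ α : Fin d → ℝ, A.mulVec α = Y →
      W ⬝ᵥ (B * Bᵀ)⁻¹.mulVec W ≤ (α - αstar) ⬝ᵥ Sg.mulVec (α - αstar)) ∧
    (A.mulVec (αstar + (hSg.posSemidef.sqrt)⁻¹.mulVec (Bᵀ.mulVec ((B * Bᵀ)⁻¹.mulVec W))) = Y ∧
      ((αstar + (hSg.posSemidef.sqrt)⁻¹.mulVec (Bᵀ.mulVec ((B * Bᵀ)⁻¹.mulVec W))) - αstar) ⬝ᵥ
          Sg.mulVec ((αstar + (hSg.posSemidef.sqrt)⁻¹.mulVec (Bᵀ.mulVec ((B * Bᵀ)⁻¹.mulVec W)))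
            - αstar) =
        W ⬝ᵥ (B * Bᵀ)⁻¹.mulVec W) :=
  interpolation_fundamental_price_general n d A hrank Sg hSg αstar W Y hY B hB
end

section
/- Let n ≤ d, let A ∈ ℝ^{n×d} have rank n, let α* ∈ ℝ^d, W ∈ ℝ^n, and Y := A α* + W. Given any first-stage estimate α₁ ∈ ℝ^d, define the residual W' := Y − A α₁ and the hybrid interpolator α_hybrid := α₁ + Aᵀ (A Aᵀ)^{-1} W'. Then A α_hybrid = Y (so α_hybrid interpolates the data), and its excess test MSE for whitened features satisfies ‖α_hybrid − α*‖₂² ≤ 2 ‖α₁ − α*‖₂² + (4 ‖W‖₂² + 4 ‖A(α₁ − α*)‖₂²) / λ_min(A Aᵀ), where λ_min(A Aᵀ) > 0 is the smallest eigenvalue of A Aᵀ. (Equivalently, writing the estimation error E_est := ‖α₁ − α*‖₂² and prediction error E_pred := ‖A(α₁ − α*)‖₂²/n, the test MSE of the hybrid interpolator is at most 2 E_est + (4‖W‖₂² + 4 n E_pred)/λ_min(A Aᵀ).) -/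
open Matrix

/-!
Write `M = A Aᵀ` and `W' = Y - A α₁ = W - A (α₁ - α*)`. The correction `Δ = Aᵀ M⁻¹ W'` solves
`A Δ = W'`, and `‖Δ‖² = ⟪M⁻¹ W', W'⟫ ≤ ‖W'‖² / λ_min(M)`. Since
`α_hybrid - α* = (α₁ - α*) + Δ`, two uses of `‖x ± y‖² ≤ 2‖x‖² + 2‖y‖²` give the bound.
Full row rank makes `M` positive definite, so `λ_min(M) > 0`.
-/

section DotProduct

variable {k R : Type*} [Fintype k]

theorem Matrix.sum_sq_eq_dotProduct_self [CommSemiring R] (x : k → R) :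
    ∑ i, x i ^ 2 = x ⬝ᵥ x := by
  simp only [dotProduct, sq]

variable [CommRing R] [LinearOrder R] [IsStrictOrderedRing R]

theorem Matrix.dotProduct_self_add_le (x y : k → R) :
    (x + y) ⬝ᵥ (x + y) ≤ 2 * (x ⬝ᵥ x) + 2 * (y ⬝ᵥ y) := by
  simp only [dotProduct, Pi.add_apply, Finset.mul_sum, ← Finset.sum_add_distrib]
  exact Finset.sum_le_sum fun i _ ↦ by nlinarith [sq_nonneg (x i - y i)]

theorem Matrix.dotProduct_self_sub_le (x y : k → R) :
    (x - y) ⬝ᵥ (x - y) ≤ 2 * (x ⬝ᵥ x) + 2 * (y ⬝ᵥ y) := by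
  simpa [sub_eq_add_neg] using dotProduct_self_add_le x (-y)

end DotProduct

section Eigenvalues

variable {n : Type*} [Fintype n] [DecidableEq n] {M : Matrix n n ℝ}

open scoped MatrixOrder in
theorem Matrix.IsHermitian.iInf_eigenvalues_mul_dotProduct_self_le (hM : M.IsHermitian)
    (x : n → ℝ) : (⨅ i, hM.eigenvalues i) * (x ⬝ᵥ x) ≤ x ⬝ᵥ (M *ᵥ x) := by
  have hle : algebraMap ℝ (Matrix n n ℝ) (⨅ i, hM.eigenvalues i) ≤ M := by
    rw [algebraMap_le_iff_le_spectrum hM.isSelfAdjoint, hM.spectrum_real_eq_range_eigenvalues]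
    rintro _ ⟨i, rfl⟩
    exact ciInf_le (Finite.bddBelow_range _) i
  simpa [sub_mulVec, dotProduct_sub, algebraMap_eq_diagonal, Pi.algebraMap_def, smul_eq_mul]
    using (Matrix.le_iff.mp hle).dotProduct_mulVec_nonneg x

/-- With `c = λ_min(M)`: `u ⬝ v = u ⬝ M u ≥ c ‖u‖²`, and expanding `0 ≤ ‖v - c u‖²` turns this
into `c (u ⬝ v) ≤ ‖v‖²`. -/
theorem Matrix.IsHermitian.dotProduct_le_div_iInf_eigenvalues (hM : M.IsHermitian)
    (hc : 0 < ⨅ i, hM.eigenvalues i) {u v : n → ℝ} (huv : M *ᵥ u = v) :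
    u ⬝ᵥ v ≤ (v ⬝ᵥ v) / ⨅ i, hM.eigenvalues i := by
  set c := ⨅ i, hM.eigenvalues i
  have hu : c * (u ⬝ᵥ u) ≤ u ⬝ᵥ v := huv ▸ hM.iInf_eigenvalues_mul_dotProduct_self_le u
  have hsq : 0 ≤ (v - c • u) ⬝ᵥ (v - c • u) := by
    simpa using dotProduct_star_self_nonneg (v - c • u)
  simp only [sub_dotProduct, dotProduct_sub, smul_dotProduct, dotProduct_smul, smul_eq_mul,
    dotProduct_comm v u] at hsq
  rw [le_div_iff₀ hc]
  nlinarith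

theorem Matrix.PosDef.iInf_eigenvalues_pos [Nonempty n] (hM : M.PosDef) :
    0 < ⨅ i, hM.1.eigenvalues i := by
  obtain ⟨i, hi⟩ := exists_eq_ciInf_of_finite (f := hM.1.eigenvalues)
  exact hi ▸ hM.eigenvalues_pos i

end Eigenvalues

theorem Matrix.isUnit_of_rank_eq_card_s16 {m K : Type*} [Fintype m] [DecidableEq m] [Field K]
    {M : Matrix m m K} (h : M.rank = Fintype.card m) : IsUnit M := by
  rw [← mulVec_surjective_iff_isUnit, ← coe_mulVecLin, ← LinearMap.range_eq_top]
  exact Submodule.eq_top_of_finrank_eq <| by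
    rw [← Matrix.rank, h, Module.finrank_fintype_fun_eq_card]

theorem Matrix.posDef_mul_transpose_of_rank_eq_card {m k : Type*} [Fintype m] [Fintype k]
    [DecidableEq m] {A : Matrix m k ℝ} (h : A.rank = Fintype.card m) : (A * Aᵀ).PosDef :=
  (posSemidef_self_mul_conjTranspose A).posDef_iff_isUnit.mpr <| isUnit_of_rank_eq_card_s16 <| by
    rw [conjTranspose_eq_transpose_of_trivial, rank_self_mul_transpose, h]

section MinNormSolution

variable {m k : Type*} [Fintype m] [Fintype k] [DecidableEq m]

noncomputable def Matrix.minNormSolution {R : Type*} [CommRing R] (A : Matrix m k R)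
    (v : m → R) : k → R :=
  Aᵀ *ᵥ ((A * Aᵀ)⁻¹ *ᵥ v)

section CommRing

variable {R : Type*} [CommRing R] {A : Matrix m k R}

theorem Matrix.mulVec_minNormSolution (hA : IsUnit (A * Aᵀ).det) (v : m → R) :
    A *ᵥ A.minNormSolution v = v := by
  rw [minNormSolution, mulVec_mulVec, mulVec_mulVec, mul_nonsing_inv _ hA, one_mulVec]

theorem Matrix.minNormSolution_dotProduct_self (hA : IsUnit (A * Aᵀ).det) (v : m → R) :
    A.minNormSolution v ⬝ᵥ A.minNormSolution v = ((A * Aᵀ)⁻¹ *ᵥ v) ⬝ᵥ v := by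
  rw [minNormSolution, dotProduct_mulVec, vecMul_transpose, mulVec_mulVec, mulVec_mulVec,
    mul_nonsing_inv _ hA, one_mulVec, dotProduct_comm]

end CommRing

theorem Matrix.minNormSolution_dotProduct_self_le {A : Matrix m k ℝ}
    (hH : (A * Aᵀ).IsHermitian) (hc : 0 < ⨅ i, hH.eigenvalues i) (v : m → ℝ) :
    A.minNormSolution v ⬝ᵥ A.minNormSolution v ≤ (v ⬝ᵥ v) / ⨅ i, hH.eigenvalues i := by
  have hdet : IsUnit (A * Aᵀ).det := (hH.posDef_iff_eigenvalues_pos.mpr fun i ↦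
    hc.trans_le (ciInf_le (Finite.bddBelow_range _) i)).det_pos.ne'.isUnit
  rw [minNormSolution_dotProduct_self hdet]
  exact hH.dotProduct_le_div_iInf_eigenvalues hc <| by
    rw [mulVec_mulVec, mul_nonsing_inv _ hdet, one_mulVec]

end MinNormSolution

theorem hybrid_interpolator_mse_bound_general (n d : ℕ) (hn : 0 < n)
    (A : Matrix (Fin n) (Fin d) ℝ) (hrank : A.rank = n)
    (hH : (A * Aᵀ).IsHermitian)
    (αstar α₁ : Fin d → ℝ) (W : Fin n → ℝ) (Y : Fin n → ℝ)
    (hY : Y = A.mulVec αstar + W)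
    (αhybrid : Fin d → ℝ)
    (hhybrid : αhybrid = α₁ + Aᵀ.mulVec ((A * Aᵀ)⁻¹.mulVec (Y - A.mulVec α₁))) :
    A.mulVec αhybrid = Y ∧
    (0 < ⨅ i, hH.eigenvalues i) ∧
    ∑ j, (αhybrid j - αstar j) ^ 2 ≤
      2 * ∑ j, (α₁ j - αstar j) ^ 2 +
        (4 * ∑ i, (W i) ^ 2 + 4 * ∑ i, (A.mulVec (α₁ - αstar) i) ^ 2) /
          (⨅ i, hH.eigenvalues i) := by
  have : Nonempty (Fin n) := Fin.pos_iff_nonempty.mp hn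
  have hPD : (A * Aᵀ).PosDef := posDef_mul_transpose_of_rank_eq_card (by simpa using hrank)
  have hc : 0 < ⨅ i, hH.eigenvalues i := hPD.iInf_eigenvalues_pos
  change αhybrid = α₁ + A.minNormSolution (Y - A *ᵥ α₁) at hhybrid
  refine ⟨by rw [hhybrid, mulVec_add, mulVec_minNormSolution hPD.det_pos.ne'.isUnit,
    add_sub_cancel], hc, ?_⟩
  set e := α₁ - αstar
  set Δ := A.minNormSolution (W - A *ᵥ e)
  have hres : Y - A *ᵥ α₁ = W - A *ᵥ e := by rw [hY, mulVec_sub]; abel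
  have herr : αhybrid - αstar = e + Δ := by rw [hhybrid, hres, add_sub_right_comm]
  simp only [← Pi.sub_apply, sum_sq_eq_dotProduct_self, herr]
  calc (e + Δ) ⬝ᵥ (e + Δ) ≤ 2 * (e ⬝ᵥ e) + 2 * (Δ ⬝ᵥ Δ) := dotProduct_self_add_le e Δ
    _ ≤ 2 * (e ⬝ᵥ e) + 2 * ((2 * (W ⬝ᵥ W) + 2 * ((A *ᵥ e) ⬝ᵥ (A *ᵥ e))) /
          ⨅ i, hH.eigenvalues i) := by
      gcongr
      exact (A.minNormSolution_dotProduct_self_le hH hc _).trans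
        (by gcongr; exact dotProduct_self_sub_le W (A *ᵥ e))
    _ = _ := by ring

/-- For `n ≤ d`, a rank-`n` matrix `A`, true signal `αstar`, noise `W`,
data `Y = A αstar + W`, and any first-stage estimate `α₁`, the hybrid interpolator
`α_hybrid = α₁ + Aᵀ (A Aᵀ)⁻¹ (Y - A α₁)` interpolates the data, the smallest eigenvalue of
`A Aᵀ` is positive, and the excess test MSE of the hybrid interpolator (for whitened
features) satisfies
`‖α_hybrid - αstar‖₂² ≤ 2 ‖α₁ - αstar‖₂² + (4‖W‖₂² + 4‖A(α₁ - αstar)‖₂²) / λ_min(A Aᵀ)`. -/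
theorem hybrid_interpolator_mse_bound (n d : ℕ) (hn : 0 < n) (hnd : n ≤ d)
    (A : Matrix (Fin n) (Fin d) ℝ) (hrank : A.rank = n)
    (hH : (A * Aᵀ).IsHermitian)
    (αstar α₁ : Fin d → ℝ) (W : Fin n → ℝ) (Y : Fin n → ℝ)
    (hY : Y = A.mulVec αstar + W)
    (αhybrid : Fin d → ℝ)
    (hhybrid : αhybrid = α₁ + Aᵀ.mulVec ((A * Aᵀ)⁻¹.mulVec (Y - A.mulVec α₁))) :
    A.mulVec αhybrid = Y ∧
    (0 < ⨅ i, hH.eigenvalues i) ∧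
    ∑ j, (αhybrid j - αstar j) ^ 2 ≤
      2 * ∑ j, (α₁ j - αstar j) ^ 2 +
        (4 * ∑ i, (W i) ^ 2 + 4 * ∑ i, (A.mulVec (α₁ - αstar) i) ^ 2) /
          (⨅ i, hH.eigenvalues i) :=
  hybrid_interpolator_mse_bound_general n d hn A hrank hH αstar α₁ W Y hY αhybrid hhybrid
end

section
/- Let d > 4n ≥ 4, let k ≥ 2 with k ≤ d, let σ > 0, and let C > 0, C' > 0, δ ∈ (0,1). Let A ∈ ℝ^{n×d} have rank n, α* ∈ ℝ^d, W ∈ ℝ^n, Y := A α* + W, and suppose: (i) ‖α₁ − α*‖₂² ≤ C σ² k ln(d/k) / n; (ii) ‖A(α₁ − α*)‖₂² ≤ C' σ² k ln(d/k); (iii) ‖W‖₂² ≤ n σ² (1 + δ); and (iv) λ_min(A Aᵀ) ≥ (√d − 2√n)². Then the hybrid interpolator α_hybrid := α₁ + Aᵀ (A Aᵀ)^{-1} (Y − A α₁) satisfies ‖α_hybrid − α*‖₂² ≤ 2 C σ² k ln(d/k)/n + (4 n σ² (1 + δ) + 4 C' σ² k ln(d/k)) / (√d − 2√n)². In particular the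 hybrid interpolator attains the order-optimal rate O(σ² k ln(d/k)/n + σ² n/d) among all interpolating solutions in the (k, σ)-sparse linear model. -/
open Matrix

lemma quad_form_le_aux (n : ℕ) (M : Matrix (Fin n) (Fin n) ℝ) (hM : M.IsHermitian)
    (lam : ℝ) (hlam : 0 < lam) (hev : ∀ i, lam ≤ hM.eigenvalues i) (u : Fin n → ℝ) :
    lam * (u ⬝ᵥ M.mulVec u) ≤ (M.mulVec u) ⬝ᵥ (M.mulVec u) := by
  classical
  set U : Matrix (Fin n) (Fin n) ℝ := (hM.eigenvectorUnitary : Matrix (Fin n) (Fin n) ℝ)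
    with hUdef
  have hUT : star U = Uᵀ := by
    rw [Matrix.star_eq_conjTranspose, Matrix.conjTranspose_eq_transpose_of_trivial]
  have hU2 : Uᵀ * U = 1 := by
    rw [← hUT]; exact (Matrix.mem_unitaryGroup_iff').mp hM.eigenvectorUnitary.2
  set e := hM.eigenvalues with hedef
  have hspec : M = U * Matrix.diagonal e * star U := by
    have := hM.spectral_theorem
    simpa using this
  set c := (star U).mulVec u with hcdef
  have hMu : M.mulVec u = U.mulVec (fun i => e i * c i) := by
    have h1 : M.mulVec u = U.mulVec ((Matrix.diagonal e).mulVec c) := by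
      rw [hspec, hcdef, Matrix.mulVec_mulVec, Matrix.mulVec_mulVec]
    have h2 : (Matrix.diagonal e).mulVec c = fun i => e i * c i :=
      funext fun i => Matrix.mulVec_diagonal e c i
    rw [h1, h2]
  have hc : c = u ᵥ* U := by
    funext i
    simp [hcdef, Matrix.mulVec, Matrix.vecMul, dotProduct, mul_comm]
  have hiso : ∀ x : Fin n → ℝ, (U.mulVec x) ⬝ᵥ (U.mulVec x) = x ⬝ᵥ x := by
    intro x
    rw [Matrix.dotProduct_mulVec, ← Matrix.mulVec_transpose, Matrix.mulVec_mulVec, hU2,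
      Matrix.one_mulVec]
  have hq : u ⬝ᵥ M.mulVec u = ∑ i, e i * c i ^ 2 := by
    rw [hMu, Matrix.dotProduct_mulVec, ← hc]
    simp only [dotProduct]
    exact Finset.sum_congr rfl fun i _ => by ring
  have hq2 : (M.mulVec u) ⬝ᵥ (M.mulVec u) = ∑ i, (e i * c i) ^ 2 := by
    rw [hMu, hiso]
    simp only [dotProduct]
    exact Finset.sum_congr rfl fun i _ => by ring
  rw [hq, hq2, Finset.mul_sum]
  refine Finset.sum_le_sum fun i _ => ?_
  have h0 : (0:ℝ) ≤ e i := le_trans hlam.le (hev i)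
  have : lam * e i ≤ e i * e i := mul_le_mul_of_nonneg_right (hev i) h0
  calc lam * (e i * c i ^ 2) = (lam * e i) * c i ^ 2 := by ring
    _ ≤ (e i * e i) * c i ^ 2 := mul_le_mul_of_nonneg_right this (sq_nonneg _)
    _ = (e i * c i) ^ 2 := by ring

/-- Let `d > 4n ≥ 4`, `2 ≤ k ≤ d`, and suppose the first-stage estimator
`α₁` enjoys the order-optimal estimation- and prediction-error guarantees (i), (ii) for the
`(k, σ)`-sparse linear model, while (iii) the chi-square event `‖W‖₂² ≤ n σ² (1 + δ)` and
(iv) the Gaussian-matrix event `λ_min(A Aᵀ) ≥ (√d - 2√n)²` hold.  Then the hybrid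
interpolator `α_hybrid = α₁ + Aᵀ (A Aᵀ)⁻¹ (Y - A α₁)` satisfies
`‖α_hybrid - αstar‖₂² ≤ 2 C σ² k ln(d/k)/n + (4 n σ² (1+δ) + 4 C' σ² k ln(d/k)) / (√d - 2√n)²`,
the order-optimal rate `O(σ² k ln(d/k)/n + σ² n/d)` among all interpolating solutions. -/
theorem hybrid_interpolator_order_optimal (n d k : ℕ)
    (hn : 1 ≤ n) (hd : 4 * n < d) (hk : 2 ≤ k) (hkd : k ≤ d)
    (σ C C' δ : ℝ) (hσ : 0 < σ) (hC : 0 < C) (hC' : 0 < C') (hδ0 : 0 < δ) (hδ1 : δ < 1)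
    (A : Matrix (Fin n) (Fin d) ℝ) (hrank : A.rank = n)
    (hH : (A * Aᵀ).IsHermitian)
    (αstar α₁ : Fin d → ℝ) (W Y : Fin n → ℝ)
    (hY : Y = A.mulVec αstar + W)
    -- (i) order-optimal estimation error of the first-stage estimator
    (h₁ : ∑ j, (α₁ j - αstar j) ^ 2 ≤ C * σ ^ 2 * k * Real.log ((d : ℝ) / k) / n)
    -- (ii) order-optimal prediction error of the first-stage estimator
    (h₂ : ∑ i, (A.mulVec (α₁ - αstar) i) ^ 2 ≤ C' * σ ^ 2 * k * Real.log ((d : ℝ) / k))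
    -- (iii) chi-square upper bound on the noise energy
    (h₃ : ∑ i, (W i) ^ 2 ≤ (n : ℝ) * σ ^ 2 * (1 + δ))
    -- (iv) lower bound on the smallest eigenvalue of `A Aᵀ`
    (h₄ : ∀ i, (Real.sqrt d - 2 * Real.sqrt n) ^ 2 ≤ hH.eigenvalues i)
    (αhybrid : Fin d → ℝ)
    (hhybrid : αhybrid = α₁ + Aᵀ.mulVec ((A * Aᵀ)⁻¹.mulVec (Y - A.mulVec α₁))) :
    ∑ j, (αhybrid j - αstar j) ^ 2 ≤
      2 * C * σ ^ 2 * k * Real.log ((d : ℝ) / k) / n +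
        (4 * n * σ ^ 2 * (1 + δ) + 4 * C' * σ ^ 2 * k * Real.log ((d : ℝ) / k)) /
          (Real.sqrt d - 2 * Real.sqrt n) ^ 2 := by
  classical
  set lam : ℝ := (Real.sqrt d - 2 * Real.sqrt n) ^ 2 with hlamdef
  -- positivity of lam
  have hsq : 2 * Real.sqrt n < Real.sqrt d := by
    have h4n : Real.sqrt ((4 * n : ℕ) : ℝ) < Real.sqrt d := by
      apply Real.sqrt_lt_sqrt (by positivity)
      exact_mod_cast hd
    have : Real.sqrt ((4 * n : ℕ) : ℝ) = 2 * Real.sqrt n := by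
      push_cast
      rw [Real.sqrt_mul (by norm_num : (0:ℝ) ≤ 4), show (4:ℝ) = 2 ^ 2 by norm_num,
        Real.sqrt_sq (by norm_num : (0:ℝ) ≤ 2)]
    linarith [this ▸ h4n]
  have hlam : 0 < lam := by
    rw [hlamdef]
    exact pow_pos (sub_pos.mpr hsq) 2
  set M : Matrix (Fin n) (Fin n) ℝ := A * Aᵀ with hMdef
  -- determinant nonzero
  have hdet : M.det ≠ 0 := by
    have hprod := hH.det_eq_prod_eigenvalues
    have hpos : (0:ℝ) < ∏ i, hH.eigenvalues i :=
      Finset.prod_pos fun i _ => lt_of_lt_of_le hlam (h₄ i)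
    have : M.det = ∏ i, hH.eigenvalues i := by simpa using hprod
    rw [this]; exact ne_of_gt hpos
  set v : Fin n → ℝ := Y - A.mulVec α₁ with hvdef
  set u : Fin n → ℝ := M⁻¹.mulVec v with hudef
  have hMuv : M.mulVec u = v := by
    rw [hudef, Matrix.mulVec_mulVec, Matrix.mul_nonsing_inv _ (isUnit_iff_ne_zero.mpr hdet),
      Matrix.one_mulVec]
  -- quadratic form identity
  have hkey : u ⬝ᵥ M.mulVec u = (Aᵀ.mulVec u) ⬝ᵥ (Aᵀ.mulVec u) := by
    rw [hMdef, ← Matrix.mulVec_mulVec, Matrix.dotProduct_mulVec, ← Matrix.mulVec_transpose]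
  -- bound on ‖v‖²
  have hv2 : v ⬝ᵥ v ≤ 2 * (C' * σ ^ 2 * k * Real.log ((d : ℝ) / k)) +
      2 * ((n : ℝ) * σ ^ 2 * (1 + δ)) := by
    have hvi : ∀ i, v i = W i - A.mulVec (α₁ - αstar) i := by
      intro i
      rw [hvdef, hY]
      simp [Matrix.mulVec_sub]
      ring
    have : v ⬝ᵥ v = ∑ i, (v i) ^ 2 := by
      simp [dotProduct, sq]
    rw [this]
    calc ∑ i, (v i) ^ 2
        ≤ ∑ i, (2 * (A.mulVec (α₁ - αstar) i) ^ 2 + 2 * (W i) ^ 2) := by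
          refine Finset.sum_le_sum fun i _ => ?_
          rw [hvi i]
          nlinarith [sq_nonneg (W i + A.mulVec (α₁ - αstar) i)]
      _ = 2 * ∑ i, (A.mulVec (α₁ - αstar) i) ^ 2 + 2 * ∑ i, (W i) ^ 2 := by
          rw [Finset.sum_add_distrib, ← Finset.mul_sum, ← Finset.mul_sum]
      _ ≤ 2 * (C' * σ ^ 2 * k * Real.log ((d : ℝ) / k)) + 2 * ((n : ℝ) * σ ^ 2 * (1 + δ)) := by
          linarith
  -- S2 bound
  have hS2 : ∑ j, (Aᵀ.mulVec u j) ^ 2 ≤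
      (2 * (C' * σ ^ 2 * k * Real.log ((d : ℝ) / k)) + 2 * ((n : ℝ) * σ ^ 2 * (1 + δ))) / lam := by
    have hquad := quad_form_le_aux n M hH lam hlam h₄ u
    rw [hMuv] at hquad
    have hsum : ∑ j, (Aᵀ.mulVec u j) ^ 2 = u ⬝ᵥ M.mulVec u := by
      rw [hkey]
      simp [dotProduct, sq]
    rw [hMuv] at hsum
    rw [hsum, le_div_iff₀ hlam]
    calc (u ⬝ᵥ v) * lam = lam * (u ⬝ᵥ v) := by ring
      _ ≤ v ⬝ᵥ v := hquad
      _ ≤ _ := hv2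
  -- pointwise decomposition
  have hdecomp : ∀ j, αhybrid j - αstar j = (α₁ j - αstar j) + Aᵀ.mulVec u j := by
    intro j
    rw [hhybrid]
    simp [hudef, hvdef, hMdef]
    ring
  calc ∑ j, (αhybrid j - αstar j) ^ 2
      = ∑ j, ((α₁ j - αstar j) + Aᵀ.mulVec u j) ^ 2 := by
        exact Finset.sum_congr rfl fun j _ => by rw [hdecomp j]
    _ ≤ ∑ j, (2 * (α₁ j - αstar j) ^ 2 + 2 * (Aᵀ.mulVec u j) ^ 2) := by
        refine Finset.sum_le_sum fun j _ => ?_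
        nlinarith [sq_nonneg ((α₁ j - αstar j) - Aᵀ.mulVec u j)]
    _ = 2 * ∑ j, (α₁ j - αstar j) ^ 2 + 2 * ∑ j, (Aᵀ.mulVec u j) ^ 2 := by
        rw [Finset.sum_add_distrib, ← Finset.mul_sum, ← Finset.mul_sum]
    _ ≤ 2 * (C * σ ^ 2 * k * Real.log ((d : ℝ) / k) / n) +
        2 * ((2 * (C' * σ ^ 2 * k * Real.log ((d : ℝ) / k)) +
          2 * ((n : ℝ) * σ ^ 2 * (1 + δ))) / lam) := by
        have := hS2
        linarith
    _ = 2 * C * σ ^ 2 * k * Real.log ((d : ℝ) / k) / n +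
        (4 * n * σ ^ 2 * (1 + δ) + 4 * C' * σ ^ 2 * k * Real.log ((d : ℝ) / k)) / lam := by
        field_simp
        ring
end

section
/- Let n, M be positive integers, d := (M+1)·n, fix k* ∈ {0,…,n−1}, and let w₀,…,w_{d−1} > 0 be positive real weights. Define V := Σ_{l=0}^{M} w_{k*+ln}², and let α̂ ∈ ℂ^d be the vector with α̂_j = w_j²/V if j ∈ {k*, k*+n, k*+2n, …, k*+Mn} and α̂_j = 0 otherwise. Then α̂ is the unique minimizer of the weighted norm Σ_{j=0}^{d−1} |α_j|²/w_j² over all α ∈ ℂ^d satisfying the interpolation constraints Σ_{k=0}^{d−1} α_k · exp(2πi k j/n) = exp(2πi k* j/n) for every j ∈ {0,…,n−1}. In particular, the survival factor of the true frequency k* equals α̂_{k*} = w_{k*}² / Σ_{l=0}^{M} w_{k*+ln}², so the true signal coefficient is attenuated by exactly the ratio of its squared weight to the total squared weight of itself and all its exact aliases. -/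
open Complex ComplexConjugate Finset

/-! On the grid `j / n` the feature of frequency `k` coincides with that of `k % n`, and the
characters `j ↦ ζ ^ (r * j)`, `r < n`, are orthogonal. Averaging the interpolation constraints
against the character of `kstar` therefore shows that every interpolant `α` has
`∑_{k ≡ kstar} α k = 1`. Under this single linear constraint the weighted norm
`∑ |α k|² / w k²` is minimized exactly by `α k = w k² / V` on the alias class: expanding around
it, the cross term is a multiple of `∑_{k ≡ kstar} (α k - α̂ k) = 0`. Finally `α̂` is itself an
interpolant, since all of its mass sits on aliases of `kstar`. -/

section Argmin

variable {ι : Type*} [DecidableEq ι]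

/-- The minimizer of `weightedNormSq w` on the affine hyperplane `∑ i ∈ S, α i = 1`. -/
noncomputable def argminWeightedNorm (S : Finset ι) (w : ι → ℝ) (i : ι) : ℂ :=
  if i ∈ S then ((w i ^ 2 / ∑ k ∈ S, w k ^ 2 : ℝ) : ℂ) else 0

theorem sum_argminWeightedNorm {S : Finset ι} {w : ι → ℝ} (hS : S.Nonempty)
    (hw : ∀ i ∈ S, w i ≠ 0) : ∑ i ∈ S, argminWeightedNorm S w i = 1 := by
  have hV : ∑ k ∈ S, w k ^ 2 ≠ 0 :=
    (sum_pos (fun i hi => sq_pos_of_ne_zero (hw i hi)) hS).ne'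
  unfold argminWeightedNorm
  rw [sum_congr rfl fun i hi => if_pos hi, ← ofReal_sum, ← sum_div, div_self hV, ofReal_one]

end Argmin

section WeightedNorm

variable {ι : Type*} [Fintype ι]

noncomputable def weightedNormSq (w : ι → ℝ) (α : ι → ℂ) : ℝ :=
  ∑ i, normSq (α i) / w i ^ 2

theorem weightedNormSq_add (w : ι → ℝ) (a b : ι → ℂ) :
    weightedNormSq w (a + b) = weightedNormSq w a + weightedNormSq w b +
      2 * ∑ i, (a i * conj (b i)).re / w i ^ 2 := by
  simp only [weightedNormSq, Pi.add_apply, normSq_add, mul_sum, ← sum_add_distrib]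
  exact sum_congr rfl fun i _ => by ring

theorem weightedNormSq_pos {w : ι → ℝ} (hw : ∀ i, w i ≠ 0) {a : ι → ℂ} (ha : a ≠ 0) :
    0 < weightedNormSq w a := by
  obtain ⟨i, hi⟩ := Function.ne_iff.mp ha
  exact sum_pos' (fun j _ => div_nonneg (normSq_nonneg _) (sq_nonneg _))
    ⟨i, mem_univ i, div_pos (normSq_pos.mpr hi) (sq_pos_of_ne_zero (hw i))⟩

variable [DecidableEq ι] {S : Finset ι} {w : ι → ℝ}

theorem sum_re_mul_conj_argminWeightedNorm (hw : ∀ i ∈ S, w i ≠ 0) (a : ι → ℂ) :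
    ∑ i, (a i * conj (argminWeightedNorm S w i)).re / w i ^ 2 =
      (∑ i ∈ S, a i).re / ∑ k ∈ S, w k ^ 2 := by
  have hterm : ∀ i, (a i * conj (argminWeightedNorm S w i)).re / w i ^ 2 =
      if i ∈ S then (a i).re / ∑ k ∈ S, w k ^ 2 else 0 := by
    intro i
    unfold argminWeightedNorm
    split_ifs with hi
    · rw [conj_ofReal, re_mul_ofReal]
      field_simp [hw i hi]
    · simp
  rw [sum_congr rfl fun i _ => hterm i, sum_ite_mem, univ_inter, ← sum_div, re_sum]

theorem weightedNormSq_argminWeightedNorm_lt (hw : ∀ i, w i ≠ 0) {α : ι → ℂ}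
    (hα : ∑ i ∈ S, α i = 1) (hne : α ≠ argminWeightedNorm S w) :
    weightedNormSq w (argminWeightedNorm S w) < weightedNormSq w α := by
  set β := argminWeightedNorm S w
  have hS : S.Nonempty := nonempty_of_sum_ne_zero (hα ▸ one_ne_zero)
  have hcross : ∑ i, ((α - β) i * conj (β i)).re / w i ^ 2 = 0 := by
    rw [sum_re_mul_conj_argminWeightedNorm fun i _ => hw i]
    simp only [Pi.sub_apply, sum_sub_distrib, hα, β, sum_argminWeightedNorm hS fun i _ => hw i,
      sub_self, zero_re, zero_div]
  calc weightedNormSq w β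
      < weightedNormSq w (α - β) + weightedNormSq w β + 2 * 0 := by
        linarith [weightedNormSq_pos hw (sub_ne_zero.mpr hne)]
    _ = weightedNormSq w α := by rw [← hcross, ← weightedNormSq_add, sub_add_cancel]

end WeightedNorm

namespace IsPrimitiveRoot

theorem pow_mod_mul {M : Type*} [CommMonoid M] {ζ : M} {n : ℕ} (hζ : IsPrimitiveRoot ζ n)
    (k j : ℕ) : ζ ^ (k % n * j) = ζ ^ (k * j) := by
  rw [pow_mul, pow_mul, hζ.eq_orderOf, pow_mod_orderOf]

variable {K : Type*} [Field K] {ζ : K} {n : ℕ}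

theorem sum_pow_mul_mul_inv_pow_mul (hζ : IsPrimitiveRoot ζ n) {r s : ℕ} (hr : r < n)
    (hs : s < n) :
    ∑ j ∈ range n, ζ ^ (r * j) * (ζ ^ (s * j))⁻¹ = if r = s then (n : K) else 0 := by
  have hζ0 : ζ ≠ 0 := hζ.ne_zero (by omega)
  have hterm : ∀ j, ζ ^ (r * j) * (ζ ^ (s * j))⁻¹ = (ζ ^ r / ζ ^ s) ^ j := fun j => by
    rw [div_pow, ← pow_mul, ← pow_mul, div_eq_mul_inv]
  rw [sum_congr rfl fun j _ => hterm j]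
  split_ifs with hrs
  · simp [hrs, div_self (pow_ne_zero _ hζ0)]
  · have hx : ζ ^ r / ζ ^ s ≠ 1 := fun h =>
      hrs (hζ.pow_inj hr hs ((div_eq_one_iff_eq (pow_ne_zero _ hζ0)).mp h))
    have hxn : (ζ ^ r / ζ ^ s) ^ n = 1 := by
      rw [div_pow, pow_right_comm, pow_right_comm ζ s, hζ.pow_eq_one, one_pow, one_pow, div_one]
    rw [geom_sum_eq hx, hxn, sub_self, zero_div]

variable {d s : ℕ} {α : Fin d → K}

theorem sum_mod_eq_one_of_interpolates (hζ : IsPrimitiveRoot ζ n) (hs : s < n)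
    (hα : ∀ j : Fin n, ∑ k : Fin d, α k * ζ ^ ((k : ℕ) * j) = ζ ^ (s * j)) :
    ∑ k ∈ univ.filter (fun k : Fin d => (k : ℕ) % n = s), α k = 1 := by
  have : NeZero n := ⟨by omega⟩
  have hn : (n : K) ≠ 0 := hζ.neZero'.out
  have hζs : ∀ j : ℕ, ζ ^ (s * j) ≠ 0 := fun j => pow_ne_zero _ (hζ.ne_zero (by omega))
  apply mul_left_cancel₀ hn
  -- average the constraints against `(ζ ^ (s * j))⁻¹`: only the alias class of `s` survives
  calc (n : K) * ∑ k ∈ univ.filter (fun k : Fin d => (k : ℕ) % n = s), α k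
      = ∑ k : Fin d, α k * if (k : ℕ) % n = s then (n : K) else 0 := by
        rw [sum_filter, mul_sum]
        exact sum_congr rfl fun k _ => by split_ifs <;> simp [mul_comm]
    _ = ∑ k : Fin d, α k * ∑ j : Fin n, ζ ^ ((k : ℕ) % n * j) * (ζ ^ (s * j))⁻¹ := by
        refine sum_congr rfl fun k _ => ?_
        rw [Fin.sum_univ_eq_sum_range (fun j => ζ ^ ((k : ℕ) % n * j) * (ζ ^ (s * j))⁻¹),
          hζ.sum_pow_mul_mul_inv_pow_mul (Nat.mod_lt _ (by omega)) hs]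
    _ = ∑ j : Fin n, (∑ k : Fin d, α k * ζ ^ ((k : ℕ) * j)) * (ζ ^ (s * j))⁻¹ := by
        simp_rw [hζ.pow_mod_mul, mul_sum, sum_mul, mul_assoc]
        exact sum_comm
    _ = n * 1 := by simp [hα, hζs]

theorem sum_mul_pow_eq_of_support (hζ : IsPrimitiveRoot ζ n)
    (hsupp : ∀ k : Fin d, (k : ℕ) % n ≠ s → α k = 0)
    (hsum : ∑ k ∈ univ.filter (fun k : Fin d => (k : ℕ) % n = s), α k = 1) (j : ℕ) :
    ∑ k, α k * ζ ^ ((k : ℕ) * j) = ζ ^ (s * j) := by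
  calc ∑ k : Fin d, α k * ζ ^ ((k : ℕ) * j)
      = ∑ k : Fin d, α k * ζ ^ (s * j) := sum_congr rfl fun k _ => by
        by_cases hk : (k : ℕ) % n = s
        · rw [← hζ.pow_mod_mul, hk]
        · rw [hsupp k hk, zero_mul, zero_mul]
    _ = ζ ^ (s * j) := by
        rw [← sum_mul, ← sum_filter_of_ne fun k _ hk => not_imp_comm.mp (hsupp k) hk, hsum,
          one_mul]

end IsPrimitiveRoot

theorem Complex.exp_two_pi_I_mul_mul_div (n k j : ℕ) :
    exp (2 * Real.pi * I * k * j / n) = exp (2 * Real.pi * I / n) ^ (k * j) := by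
  rw [← exp_nat_mul]
  push_cast
  ring_nf

theorem weighted_l2_interpolation_fourier_aliases_general
    (n M : ℕ) (d : ℕ) (hd : d = (M + 1) * n)
    (kstar : ℕ) (hk : kstar < n)
    (w : Fin d → ℝ) (hw : ∀ j, 0 < w j)
    (V : ℝ)
    (hV : V = ∑ j ∈ Finset.univ.filter (fun j : Fin d => (j : ℕ) % n = kstar), (w j) ^ 2)
    (αhat : Fin d → ℂ)
    (hαhat : ∀ j : Fin d,
      αhat j = if (j : ℕ) % n = kstar then (((w j) ^ 2 / V : ℝ) : ℂ) else 0) :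
    -- `α̂` interpolates the sampled true signal
    (∀ j : Fin n, ∑ k : Fin d,
        αhat k * Complex.exp (2 * Real.pi * Complex.I * ((k : ℕ) : ℂ) * ((j : ℕ) : ℂ) / n) =
      Complex.exp (2 * Real.pi * Complex.I * (kstar : ℂ) * ((j : ℕ) : ℂ) / n)) ∧
    -- `α̂` is the unique minimizer of the weighted norm among interpolators
    (∀ α : Fin d → ℂ,
      (∀ j : Fin n, ∑ k : Fin d,
          α k * Complex.exp (2 * Real.pi * Complex.I * ((k : ℕ) : ℂ) * ((j : ℕ) : ℂ) / n) =
        Complex.exp (2 * Real.pi * Complex.I * (kstar : ℂ) * ((j : ℕ) : ℂ) / n)) →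
      α ≠ αhat →
      ∑ j, Complex.normSq (αhat j) / (w j) ^ 2 < ∑ j, Complex.normSq (α j) / (w j) ^ 2) ∧
    -- the survival factor of the true frequency `kstar`
    (∀ j : Fin d, (j : ℕ) = kstar → αhat j = (((w j) ^ 2 / V : ℝ) : ℂ)) := by
  set S := univ.filter fun j : Fin d => (j : ℕ) % n = kstar
  have hαhat_eq : αhat = argminWeightedNorm S w :=
    funext fun j => by simp only [hαhat, argminWeightedNorm, S, hV, mem_filter, mem_univ, true_and]
  have hS : S.Nonempty :=
    ⟨⟨kstar, by rw [hd]; nlinarith⟩, by simp [S, Nat.mod_eq_of_lt hk]⟩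
  have hζ := Complex.isPrimitiveRoot_exp n (by omega)
  simp only [Complex.exp_two_pi_I_mul_mul_div]
  refine ⟨fun j => ?_, fun α hα hne => ?_, fun j hj => ?_⟩
  · refine hζ.sum_mul_pow_eq_of_support (fun k hk => ?_) ?_ j
    · simp [hαhat k, hk]
    · rw [hαhat_eq]
      exact sum_argminWeightedNorm hS fun i _ => (hw i).ne'
  · rw [hαhat_eq] at hne ⊢
    exact weightedNormSq_argminWeightedNorm_lt (fun i => (hw i).ne')
      (hζ.sum_mod_eq_one_of_interpolates hk hα) hne
  · rw [hαhat j, if_pos (by rw [hj, Nat.mod_eq_of_lt hk])]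

/-- Let `d = (M+1) n` and consider the complex Fourier features
`f_k(x) = exp(2πi k x)` sampled at the regularly spaced points `x_j = j/n`, `j < n`.
Fix a true frequency `kstar < n` and positive weights `w`.  With
`V = Σ_{j ≡ kstar (mod n)} w_j²`, the vector `α̂` with `α̂_j = w_j²/V` on the alias set
`{j : j ≡ kstar (mod n)}` and `0` elsewhere interpolates the signal
`y_j = exp(2πi kstar j / n)`, is the unique minimizer of the weighted norm
`Σ_j |α_j|²/w_j²` among all interpolating coefficient vectors, and in particular the
survival factor of the true frequency is `α̂_{kstar} = w_{kstar}²/V`. -/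
theorem weighted_l2_interpolation_fourier_aliases
    (n M : ℕ) (hn : 0 < n) (hM : 0 < M) (d : ℕ) (hd : d = (M + 1) * n)
    (kstar : ℕ) (hk : kstar < n)
    (w : Fin d → ℝ) (hw : ∀ j, 0 < w j)
    (V : ℝ)
    (hV : V = ∑ j ∈ Finset.univ.filter (fun j : Fin d => (j : ℕ) % n = kstar), (w j) ^ 2)
    (αhat : Fin d → ℂ)
    (hαhat : ∀ j : Fin d,
      αhat j = if (j : ℕ) % n = kstar then (((w j) ^ 2 / V : ℝ) : ℂ) else 0) :
    -- `α̂` interpolates the sampled true signal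
    (∀ j : Fin n, ∑ k : Fin d,
        αhat k * Complex.exp (2 * Real.pi * Complex.I * ((k : ℕ) : ℂ) * ((j : ℕ) : ℂ) / n) =
      Complex.exp (2 * Real.pi * Complex.I * (kstar : ℂ) * ((j : ℕ) : ℂ) / n)) ∧
    -- `α̂` is the unique minimizer of the weighted norm among interpolators
    (∀ α : Fin d → ℂ,
      (∀ j : Fin n, ∑ k : Fin d,
          α k * Complex.exp (2 * Real.pi * Complex.I * ((k : ℕ) : ℂ) * ((j : ℕ) : ℂ) / n) =
        Complex.exp (2 * Real.pi * Complex.I * (kstar : ℂ) * ((j : ℕ) : ℂ) / n)) →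
      α ≠ αhat →
      ∑ j, Complex.normSq (αhat j) / (w j) ^ 2 < ∑ j, Complex.normSq (α j) / (w j) ^ 2) ∧
    -- the survival factor of the true frequency `kstar`
    (∀ j : Fin d, (j : ℕ) = kstar → αhat j = (((w j) ^ 2 / V : ℝ) : ℂ)) :=
  weighted_l2_interpolation_fourier_aliases_general n M d hd kstar hk w hw V hV αhat hαhat
end
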